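/- arXiv:2208.00569 — 5 statements merged into one kernel-verified Lean document; each statement's English description precedes it below -/
import Mathlib

section
/- Let $w : [0,T]\times[0,X]\times[0,1] \to \mathbb{R}$ be $C^2$ and satisfy $-\partial_\tau w - \eta\,\partial_\xi w + w^2 \partial_\eta^2 w = 0$ on the interior $D=(0,T]\times(0,X]\times(0,1)$. Fix constants $C_0>0$ and $0<\mu<1/100$, and define $g(\tau,\xi,\eta) = C_0(1-\eta)\sqrt{-\ln(\mu(1-\eta))} - w + \varepsilon\tau$ for $\varepsilon>0$. Then at any interior point of $D$, $L_0 g := -\partial_\tau g - \eta\,\partial_\xi g + w^2 \partial_\eta^2 g \le -\varepsilon < 0$. -/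
/-!
Put `φ(η) = (1 - η) √(-log (μ (1 - η)))`. Because `w` solves `L₀ w = 0` and `φ` depends on `η`
alone, `L₀ g = -ε + C₀ w² φ''`. Writing `L = -log (μ (1 - η)) > 0` (this needs `μ < 1`), one has
`L' = 1 / (1 - η)`, `φ' = 1 / (2 √L) - √L` and
`φ'' = -1 / (2 (1 - η) √L) - 1 / (4 (1 - η) L^{3/2}) < 0`, so `L₀ g ≤ -ε`.
-/

open Real Set Filter Topology

noncomputable def croccoBarrier (μ η : ℝ) : ℝ := (1 - η) * √(-log (μ * (1 - η)))

section Barrier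

variable {μ η : ℝ}

lemma hasDerivAt_neg_log_mul_one_sub (hμ : 0 < μ) (hη : η < 1) :
    HasDerivAt (fun e => -log (μ * (1 - e))) (1 / (1 - η)) η := by
  have h1η : 0 < 1 - η := sub_pos.mpr hη
  refine (((hasDerivAt_id η).const_sub 1).const_mul μ |>.log (mul_pos hμ h1η).ne').neg
    |>.congr_deriv ?_
  simp only [mul_neg, mul_one, id_eq, one_div]
  field_simp

lemma hasDerivAt_sqrt_neg_log_mul_one_sub (hμ : 0 < μ) (hη : η < 1) (hμη : μ * (1 - η) < 1) :
    HasDerivAt (fun e => √(-log (μ * (1 - e))))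
      (1 / (2 * (1 - η) * √(-log (μ * (1 - η))))) η := by
  have hL : 0 < -log (μ * (1 - η)) := neg_pos.mpr (log_neg (by nlinarith) hμη)
  refine (hasDerivAt_neg_log_mul_one_sub hμ hη).sqrt hL.ne' |>.congr_deriv ?_
  field_simp

lemma hasDerivAt_croccoBarrier (hμ : 0 < μ) (hη : η < 1) (hμη : μ * (1 - η) < 1) :
    HasDerivAt (croccoBarrier μ)
      ((2 * √(-log (μ * (1 - η))))⁻¹ - √(-log (μ * (1 - η)))) η := by
  have hL : 0 < √(-log (μ * (1 - η))) :=
    sqrt_pos.mpr (neg_pos.mpr (log_neg (by nlinarith) hμη))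
  have h1η : 0 < 1 - η := sub_pos.mpr hη
  refine ((hasDerivAt_id η).const_sub 1).mul
    (hasDerivAt_sqrt_neg_log_mul_one_sub hμ hη hμη) |>.congr_deriv ?_
  simp only [neg_mul, one_mul, id_eq, one_div, mul_inv_rev]
  field_simp
  ring

lemma eventually_hasDerivAt_croccoBarrier (hμ : 0 < μ) (hη : η < 1) (hμη : μ * (1 - η) < 1) :
    ∀ᶠ e in 𝓝 η, HasDerivAt (croccoBarrier μ)
      ((2 * √(-log (μ * (1 - e))))⁻¹ - √(-log (μ * (1 - e)))) e := by
  have hnhds : ∀ᶠ e in 𝓝 η, e < 1 ∧ μ * (1 - e) < 1 :=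
    (eventually_lt_nhds hη).and
      ((continuous_const.mul (continuous_const.sub continuous_id)).continuousAt.eventually_lt
        continuousAt_const hμη)
  filter_upwards [hnhds] with e he
  exact hasDerivAt_croccoBarrier hμ he.1 he.2

lemma hasDerivAt_deriv_croccoBarrier (hμ : 0 < μ) (hη : η < 1) (hμη : μ * (1 - η) < 1) :
    HasDerivAt (deriv (croccoBarrier μ))
      (-(1 / (2 * (1 - η) * √(-log (μ * (1 - η)))))
        - 1 / (4 * (1 - η) * (-log (μ * (1 - η))) * √(-log (μ * (1 - η))))) η := by
  have hderiv : deriv (croccoBarrier μ) =ᶠ[𝓝 η]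
      fun e => (2 * √(-log (μ * (1 - e))))⁻¹ - √(-log (μ * (1 - e))) :=
    (eventually_hasDerivAt_croccoBarrier hμ hη hμη).mono fun _ h => h.deriv
  have hL : 0 < -log (μ * (1 - η)) := neg_pos.mpr (log_neg (by nlinarith) hμη)
  have h1η : 0 < 1 - η := sub_pos.mpr hη
  have hs := hasDerivAt_sqrt_neg_log_mul_one_sub hμ hη hμη
  refine HasDerivAt.congr_of_eventuallyEq ?_ hderiv
  refine ((hs.const_mul 2).inv (by positivity)).sub hs |>.congr_deriv ?_
  set s := √(-log (μ * (1 - η)))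
  have hs_pos : 0 < s := sqrt_pos.mpr hL
  rw [show -log (μ * (1 - η)) = s ^ 2 from (sq_sqrt hL.le).symm]
  field_simp
  ring

lemma deriv_deriv_croccoBarrier_neg (hμ : 0 < μ) (hη : η < 1) (hμη : μ * (1 - η) < 1) :
    deriv (deriv (croccoBarrier μ)) η < 0 := by
  have hL : 0 < -log (μ * (1 - η)) := neg_pos.mpr (log_neg (by nlinarith) hμη)
  have h1η : 0 < 1 - η := sub_pos.mpr hη
  rw [(hasDerivAt_deriv_croccoBarrier hμ hη hμη).deriv]
  have h₁ : 0 < 1 / (2 * (1 - η) * √(-log (μ * (1 - η)))) := by positivity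
  have h₂ : 0 < 1 / (4 * (1 - η) * (-log (μ * (1 - η))) * √(-log (μ * (1 - η)))) := by
    positivity
  linarith

end Barrier

lemma deriv_deriv_const_mul_sub_add {𝕜 : Type*} [NontriviallyNormedField 𝕜] {f g : 𝕜 → 𝕜}
    {x : 𝕜} (a c : 𝕜) (hf : ∀ᶠ y in 𝓝 x, DifferentiableAt 𝕜 f y)
    (hg : ∀ᶠ y in 𝓝 x, DifferentiableAt 𝕜 g y) (hf' : DifferentiableAt 𝕜 (deriv f) x)
    (hg' : DifferentiableAt 𝕜 (deriv g) x) :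
    deriv (deriv fun y => a * f y - g y + c) x = a * deriv (deriv f) x - deriv (deriv g) x := by
  have hderiv : deriv (fun y => a * f y - g y + c) =ᶠ[𝓝 x] fun y => a * deriv f y - deriv g y := by
    filter_upwards [hf, hg] with y hfy hgy
    exact ((hfy.hasDerivAt.const_mul a).sub hgy.hasDerivAt).add_const c |>.deriv
  rw [hderiv.deriv_eq]
  exact ((hf'.hasDerivAt.const_mul a).sub hg'.hasDerivAt).deriv

theorem stmt_0_general
    (T X C0 μ ε : ℝ) (hC0 : 0 < C0)
    (hμ : 0 < μ) (hμ' : μ < 1/100) (hε : 0 < ε)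
    (w : ℝ → ℝ → ℝ → ℝ)
    (hw : ContDiff ℝ 2 (fun p : ℝ × ℝ × ℝ => w p.1 p.2.1 p.2.2))
    (hPDE : ∀ τ ξ η, τ ∈ Set.Ioc 0 T → ξ ∈ Set.Ioc 0 X → η ∈ Set.Ioo 0 1 →
      -(deriv (fun t => w t ξ η) τ) - η * deriv (fun x => w τ x η) ξ
        + (w τ ξ η) ^ 2 * deriv (deriv (fun e => w τ ξ e)) η = 0)
    (g : ℝ → ℝ → ℝ → ℝ)
    (hg : g = fun τ ξ η =>
      C0 * (1 - η) * Real.sqrt (-Real.log (μ * (1 - η))) - w τ ξ η + ε * τ) :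
    ∀ τ ξ η, τ ∈ Set.Ioc 0 T → ξ ∈ Set.Ioc 0 X → η ∈ Set.Ioo 0 1 →
      -(deriv (fun t => g t ξ η) τ) - η * deriv (fun x => g τ x η) ξ
        + (w τ ξ η) ^ 2 * deriv (deriv (fun e => g τ ξ e)) η ≤ -ε ∧ -ε < 0 := by
  intro τ ξ η hτ hξ hη
  have hμη : μ * (1 - η) < 1 := by nlinarith [hη.1, hη.2]
  have hwτ : Differentiable ℝ (fun t => w t ξ η) :=
    (hw.comp (by fun_prop : ContDiff ℝ 2 fun t : ℝ => (t, ξ, η))).differentiable two_ne_zero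
  have hwξ : Differentiable ℝ (fun x => w τ x η) :=
    (hw.comp (by fun_prop : ContDiff ℝ 2 fun x : ℝ => (τ, x, η))).differentiable two_ne_zero
  have hwη : ContDiff ℝ 2 (fun e => w τ ξ e) :=
    hw.comp (by fun_prop : ContDiff ℝ 2 fun e : ℝ => (τ, ξ, e))
  have hgτ : deriv (fun t => g t ξ η) τ = -deriv (fun t => w t ξ η) τ + ε := by
    subst hg
    exact ((((hwτ τ).hasDerivAt.const_sub _).add ((hasDerivAt_id' τ).const_mul ε)).congr_deriv
      (by ring)).deriv
  have hgξ : deriv (fun x => g τ x η) ξ = -deriv (fun x => w τ x η) ξ := by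
    subst hg
    exact (((hwξ ξ).hasDerivAt.const_sub _).add_const (ε * τ)).deriv
  have hgη : deriv (deriv fun e => g τ ξ e) η =
      C0 * deriv (deriv (croccoBarrier μ)) η - deriv (deriv fun e => w τ ξ e) η := by
    subst hg
    simp only [mul_assoc]
    exact deriv_deriv_const_mul_sub_add C0 (ε * τ)
      ((eventually_hasDerivAt_croccoBarrier hμ hη.2 hμη).mono fun _ h => h.differentiableAt)
      (.of_forall (hwη.differentiable two_ne_zero))
      (hasDerivAt_deriv_croccoBarrier hμ hη.2 hμη).differentiableAt
      (hwη.differentiable_deriv_two η)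
  have hbarrier := deriv_deriv_croccoBarrier_neg hμ hη.2 hμη
  refine ⟨?_, neg_lt_zero.mpr hε⟩
  have hconcave : (w τ ξ η) ^ 2 * (C0 * deriv (deriv (croccoBarrier μ)) η) ≤ 0 :=
    mul_nonpos_of_nonneg_of_nonpos (sq_nonneg _) (mul_nonpos_of_nonneg_of_nonpos hC0.le hbarrier.le)
  rw [hgτ, hgξ, hgη]
  linear_combination hconcave - hPDE τ ξ η hτ hξ hη

theorem stmt_0
    (T X C0 μ ε : ℝ) (hT : 0 < T) (hX : 0 < X) (hC0 : 0 < C0)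
    (hμ : 0 < μ) (hμ' : μ < 1/100) (hε : 0 < ε)
    (w : ℝ → ℝ → ℝ → ℝ)
    (hw : ContDiff ℝ 2 (fun p : ℝ × ℝ × ℝ => w p.1 p.2.1 p.2.2))
    (hPDE : ∀ τ ξ η, τ ∈ Set.Ioc 0 T → ξ ∈ Set.Ioc 0 X → η ∈ Set.Ioo 0 1 →
      -(deriv (fun t => w t ξ η) τ) - η * deriv (fun x => w τ x η) ξ
        + (w τ ξ η) ^ 2 * deriv (deriv (fun e => w τ ξ e)) η = 0)
    (g : ℝ → ℝ → ℝ → ℝ)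
    (hg : g = fun τ ξ η =>
      C0 * (1 - η) * Real.sqrt (-Real.log (μ * (1 - η))) - w τ ξ η + ε * τ) :
    ∀ τ ξ η, τ ∈ Set.Ioc 0 T → ξ ∈ Set.Ioc 0 X → η ∈ Set.Ioo 0 1 →
      -(deriv (fun t => g t ξ η) τ) - η * deriv (fun x => g τ x η) ξ
        + (w τ ξ η) ^ 2 * deriv (deriv (fun e => g τ ξ e)) η ≤ -ε ∧ -ε < 0 :=
  stmt_0_general T X C0 μ ε hC0 hμ hμ' hε w hw hPDE g hg
end

section
/- Let $b>0$, $\alpha\in(0,1)$, $\delta>0$ with $4\delta < \alpha(1-\alpha)b^2$, and let $v(\eta) = (1-\eta)^\alpha$. Suppose $w \ge b(1-\eta)$ and $w\,\partial_\eta^2 w \le 2\delta$ pointwise on a domain. Then the linearized operator $L v := (2w\partial_\eta^2 w)v - \partial_\tau v - \eta\partial_\xi v + w^2 \partial_\eta^2 v$ satisfies $Lv \le -b^2\alpha(1-\alpha)(1-\eta)^\alpha + 4\delta(1-\eta)^\alpha < 0$ at every point with $\eta\in(0,1)$. -/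
open Real Set

/-!
Since `v = (1 - η) ^ α` does not depend on `τ` and `ξ`, only the zeroth-order term and
`w ^ 2 ∂²_η v` survive. For `α ∈ [0, 1]` the function `v` is concave with
`∂²_η v = α (α - 1) (1 - η) ^ (α - 2) ≤ 0`, so the lower bound `w ≥ b (1 - η)` turns
`w ^ 2 ∂²_η v` into at most `-b ^ 2 α (1 - α) (1 - η) ^ α`, while `w ∂²_η w ≤ 2 δ` bounds the
zeroth-order term by `4 δ (1 - η) ^ α`.
-/

lemma hasDerivAt_one_sub_rpow (α : ℝ) {x : ℝ} (hx : x < 1) :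
    HasDerivAt (fun e : ℝ => (1 - e) ^ α) (-(α * (1 - x) ^ (α - 1))) x := by
  have h := (hasDerivAt_rpow_const (p := α) (Or.inl (sub_ne_zero.mpr hx.ne'))).comp x
    ((hasDerivAt_const x (1 : ℝ)).sub (hasDerivAt_id x))
  simpa [mul_comm, Function.comp_def] using h

lemma deriv_deriv_one_sub_rpow (α : ℝ) {x : ℝ} (hx : x < 1) :
    deriv (deriv fun e : ℝ => (1 - e) ^ α) x = α * (α - 1) * (1 - x) ^ (α - 2) := by
  have hderiv : deriv (fun e : ℝ => (1 - e) ^ α) =ᶠ[nhds x]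
      fun e => -(α * (1 - e) ^ (α - 1)) := by
    filter_upwards [Iio_mem_nhds hx] with e he using (hasDerivAt_one_sub_rpow α he).deriv
  have h2 : HasDerivAt (fun e => -(α * (1 - e) ^ (α - 1)))
      (-(α * -((α - 1) * (1 - x) ^ (α - 1 - 1)))) x :=
    ((hasDerivAt_one_sub_rpow (α - 1) hx).const_mul α).neg
  rw [hderiv.deriv_eq, h2.deriv, show α - 1 - 1 = α - 2 by ring]
  ring

lemma sq_mul_deriv_deriv_one_sub_rpow_le {α b w η : ℝ} (hα : α ∈ Icc (0 : ℝ) 1) (hη : η < 1)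
    (hb : 0 ≤ b) (hw : b * (1 - η) ≤ w) :
    w ^ 2 * deriv (deriv fun e : ℝ => (1 - e) ^ α) η
      ≤ -(b ^ 2 * α * (1 - α) * (1 - η) ^ α) := by
  have h1η : 0 < 1 - η := sub_pos.mpr hη
  have hconcave : α * (α - 1) * (1 - η) ^ (α - 2) ≤ 0 :=
    mul_nonpos_of_nonpos_of_nonneg (mul_nonpos_of_nonneg_of_nonpos hα.1 (by linarith [hα.2]))
      (rpow_nonneg h1η.le _)
  have hsq : (b * (1 - η)) ^ 2 ≤ w ^ 2 := pow_le_pow_left₀ (by positivity) hw 2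
  have hpow : (1 - η) ^ (α - 2) * (1 - η) ^ 2 = (1 - η) ^ α := by
    rw [← rpow_natCast, ← rpow_add h1η]
    norm_num
  calc w ^ 2 * deriv (deriv fun e : ℝ => (1 - e) ^ α) η
      = w ^ 2 * (α * (α - 1) * (1 - η) ^ (α - 2)) := by rw [deriv_deriv_one_sub_rpow α hη]
    _ ≤ (b * (1 - η)) ^ 2 * (α * (α - 1) * (1 - η) ^ (α - 2)) :=
        mul_le_mul_of_nonpos_right hsq hconcave
    _ = -(b ^ 2 * α * (1 - α) * (1 - η) ^ α) := by rw [← hpow]; ring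

theorem stmt_5_general
    (b α δ : ℝ) (hb : 0 < b) (hα : α ∈ Set.Ioo (0:ℝ) 1)
    (hδα : 4 * δ < α * (1 - α) * b ^ 2)
    (w : ℝ → ℝ → ℝ → ℝ)
    (V : ℝ → ℝ → ℝ → ℝ)
    (hV : V = fun _ _ η => (1 - η) ^ α)
    (hwlb : ∀ τ ξ η, η ∈ Set.Ioo (0:ℝ) 1 → b * (1 - η) ≤ w τ ξ η)
    (hwηη : ∀ τ ξ η, η ∈ Set.Ioo (0:ℝ) 1 →
      w τ ξ η * deriv (deriv (fun e => w τ ξ e)) η ≤ 2 * δ) :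
    ∀ τ ξ η, η ∈ Set.Ioo (0:ℝ) 1 →
      (2 * w τ ξ η * deriv (deriv (fun e => w τ ξ e)) η) * V τ ξ η
        - deriv (fun t => V t ξ η) τ - η * deriv (fun x => V τ x η) ξ
        + (w τ ξ η) ^ 2 * deriv (deriv (fun e => V τ ξ e)) η
      ≤ -(b ^ 2 * α * (1 - α) * (1 - η) ^ α) + 4 * δ * (1 - η) ^ α ∧
      -(b ^ 2 * α * (1 - α) * (1 - η) ^ α) + 4 * δ * (1 - η) ^ α < 0 := by
  intro τ ξ η hη
  subst hV
  have hv : 0 < (1 - η) ^ α := rpow_pos_of_pos (sub_pos.mpr hη.2) α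
  have hdiffusion := sq_mul_deriv_deriv_one_sub_rpow_le (Ioo_subset_Icc_self hα) hη.2 hb.le
    (hwlb τ ξ η hη)
  have hreaction : 2 * w τ ξ η * deriv (deriv (fun e => w τ ξ e)) η * (1 - η) ^ α
      ≤ 4 * δ * (1 - η) ^ α := by
    nlinarith [mul_le_mul_of_nonneg_right (hwηη τ ξ η hη) hv.le]
  refine ⟨?_, ?_⟩
  · simp only [deriv_const]
    linarith
  · nlinarith

theorem stmt_5
    (b α δ : ℝ) (hb : 0 < b) (hα : α ∈ Set.Ioo (0:ℝ) 1) (hδ : 0 < δ)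
    (hδα : 4 * δ < α * (1 - α) * b ^ 2)
    (w : ℝ → ℝ → ℝ → ℝ)
    (V : ℝ → ℝ → ℝ → ℝ)
    (hV : V = fun _ _ η => (1 - η) ^ α)
    (hwlb : ∀ τ ξ η, η ∈ Set.Ioo (0:ℝ) 1 → b * (1 - η) ≤ w τ ξ η)
    (hwηη : ∀ τ ξ η, η ∈ Set.Ioo (0:ℝ) 1 →
      w τ ξ η * deriv (deriv (fun e => w τ ξ e)) η ≤ 2 * δ) :
    ∀ τ ξ η, η ∈ Set.Ioo (0:ℝ) 1 →
      (2 * w τ ξ η * deriv (deriv (fun e => w τ ξ e)) η) * V τ ξ η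
        - deriv (fun t => V t ξ η) τ - η * deriv (fun x => V τ x η) ξ
        + (w τ ξ η) ^ 2 * deriv (deriv (fun e => V τ ξ e)) η
      ≤ -(b ^ 2 * α * (1 - α) * (1 - η) ^ α) + 4 * δ * (1 - η) ^ α ∧
      -(b ^ 2 * α * (1 - α) * (1 - η) ^ α) + 4 * δ * (1 - η) ^ α < 0 :=
  stmt_5_general b α δ hb hα hδα w V hV hwlb hwηη
end

section
/- Suppose at a point $z$ in the region where $(1-\eta)^{\alpha_0} \le b\delta/C_1$ (with $b,\delta,C_1>0$, $\alpha_0\in(0,1)$, $b\delta/C_1 \le 2^{-\alpha_0}$) one has: $w \ge b(1-\eta) > 0$, $w\,\partial_\eta^2 w \le 2\delta$, $-\partial_\tau w \le C_1(1-\eta)^{\alpha_0}$, and the equation $w^2\partial_\eta^2 w = \eta\partial_\xi w + \partial_\tau w$ holds. Then $\eta \ge 1/2$ at $z$, and $\partial_\xi w + \partial_\tau w \le 6\delta w$ at $z$. -/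
open Real Set

theorem stmt_7
    (b δ C1 α0 η w wηη wτ wξ : ℝ)
    (hb : 0 < b) (hδ : 0 < δ) (hC1 : 0 < C1) (hα0 : α0 ∈ Set.Ioo (0:ℝ) 1)
    (hsmall : b * δ / C1 ≤ (2:ℝ) ^ (-α0))
    (hη0 : 0 ≤ η) (hη1 : η ≤ 1)
    (hregion : (1 - η) ^ α0 ≤ b * δ / C1)
    (hwlb : b * (1 - η) ≤ w) (hwpos : 0 < b * (1 - η))
    (hwηη : w * wηη ≤ 2 * δ)
    (hwτ : -wτ ≤ C1 * (1 - η) ^ α0)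
    (heq : w ^ 2 * wηη = η * wξ + wτ) :
    1 / 2 ≤ η ∧ wξ + wτ ≤ 6 * δ * w := by
  have h1η : 0 < 1 - η := by nlinarith
  have hw : 0 < w := lt_of_lt_of_le hwpos hwlb
  have h2 : (2:ℝ) ^ (-α0) = ((1:ℝ)/2) ^ α0 := by
    rw [Real.rpow_neg (by norm_num), ← Real.inv_rpow (by norm_num)]
    norm_num
  have hhalf : 1 - η ≤ 1 / 2 := by
    by_contra h
    push_neg at h
    have := Real.rpow_lt_rpow (by norm_num : (0:ℝ) ≤ 1/2) h hα0.1
    rw [← h2] at this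
    linarith [le_trans hregion hsmall]
  have hηhalf : 1 / 2 ≤ η := by linarith
  refine ⟨hηhalf, ?_⟩
  have hC : C1 * (1 - η) ^ α0 ≤ b * δ := by
    rw [div_le_iff₀ hC1] at hsmall
    calc C1 * (1 - η) ^ α0 ≤ C1 * (b * δ / C1) := by
          exact mul_le_mul_of_nonneg_left hregion hC1.le
      _ = b * δ := by field_simp
  -- η*(wξ+wτ) = w^2*wηη - (1-η)*wτ ≤ 2δw + (1-η)*C1*(1-η)^α0 ≤ 2δw + (1-η)*b*δ ≤ 3δw
  have key : η * (wξ + wτ) ≤ 3 * δ * w := by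
    have h1 : w ^ 2 * wηη ≤ 2 * δ * w := by nlinarith
    have h2 : (1 - η) * (-wτ) ≤ (1 - η) * (C1 * (1 - η) ^ α0) :=
      mul_le_mul_of_nonneg_left hwτ h1η.le
    have h3 : (1 - η) * (C1 * (1 - η) ^ α0) ≤ (1 - η) * (b * δ) :=
      mul_le_mul_of_nonneg_left hC h1η.le
    nlinarith
  nlinarith [mul_pos hδ hw]
end

section
/- Let $u:[0,\infty)\to[0,1)$ be $C^1$ with $u(0)=0$ and suppose $u'(y) \le C_0 (1-u(y))\sqrt{-\ln(\mu(1-u(y)))}$ for all $y\ge0$, where $C_0>0$ and $0<\mu<1/100$. Then there exist constants $c, C>0$ depending only on $C_0$ and $\mu$ such that $1-u(y) \ge c\, e^{-C y^2}$ for all $y\ge 0$. -/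
/-!
With `h = 1 - u`, the hypothesis reads `-h' ≤ C₀ h √(-log (μ h))`, and this says exactly that
`y ↦ √(-log (μ h y))` grows with slope at most `C₀ / 2`. Hence
`-log (μ h y) ≤ (√(-log μ) + C₀ y / 2)² ≤ -2 log μ + C₀² y² / 2`, i.e. `h y ≥ μ e^{-C₀² y² / 2}`.
-/

open Real Set

lemma hasDerivAt_sqrt_neg_log {g : ℝ → ℝ} {g' y : ℝ} (hg : HasDerivAt g g' y)
    (hg0 : 0 < g y) (hg1 : g y < 1) :
    HasDerivAt (fun z => √(-log (g z))) (-(g' / g y) / (2 * √(-log (g y)))) y :=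
  (hg.log hg0.ne').neg.sqrt (neg_pos.mpr (log_neg hg0 hg1)).ne'

lemma sqrt_neg_log_le_add_mul {g g' : ℝ → ℝ} {K : ℝ}
    (hg : ∀ y, 0 ≤ y → HasDerivAt g (g' y) y)
    (hg0 : ∀ y, 0 ≤ y → 0 < g y) (hg1 : ∀ y, 0 ≤ y → g y < 1)
    (hg' : ∀ y, 0 ≤ y → -g' y ≤ K * g y * √(-log (g y))) {y : ℝ} (hy : 0 ≤ y) :
    √(-log (g y)) ≤ √(-log (g 0)) + K / 2 * y := by
  have hf : ∀ z, 0 ≤ z → HasDerivAt (fun z => √(-log (g z)))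
      (-(g' z / g z) / (2 * √(-log (g z)))) z := fun z hz =>
    hasDerivAt_sqrt_neg_log (hg z hz) (hg0 z hz) (hg1 z hz)
  have hslope : ∀ z ∈ interior (Ici (0 : ℝ)),
      deriv (fun z => √(-log (g z))) z ≤ K / 2 := by
    intro z hz
    rw [interior_Ici] at hz
    have hz : 0 ≤ z := le_of_lt hz
    have hs : 0 < √(-log (g z)) := sqrt_pos.mpr (neg_pos.mpr (log_neg (hg0 z hz) (hg1 z hz)))
    have hquot : -(g' z / g z) ≤ K * √(-log (g z)) := by
      rw [← neg_div, div_le_iff₀ (hg0 z hz)]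
      linarith [hg' z hz]
    rw [(hf z hz).deriv, div_le_iff₀ (by positivity)]
    linarith
  have := (convex_Ici 0).image_sub_le_mul_sub_of_deriv_le
    (fun z hz => (hf z hz).continuousAt.continuousWithinAt)
    (fun z hz => (hf z (interior_subset hz)).differentiableAt.differentiableWithinAt)
    hslope 0 self_mem_Ici y hy hy
  linarith

lemma le_of_sqrt_le_add {t a b : ℝ} (ht : 0 ≤ t) (h : √t ≤ a + b) :
    t ≤ 2 * a ^ 2 + 2 * b ^ 2 := by
  have hsq : t ≤ (a + b) ^ 2 := by
    simpa [sq_sqrt ht] using pow_le_pow_left₀ (sqrt_nonneg t) h 2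
  nlinarith [sq_nonneg (a - b)]

theorem stmt_9
    (C0 μ : ℝ) (hC0 : 0 < C0) (hμ : 0 < μ) (hμ' : μ < 1/100)
    (u d : ℝ → ℝ)
    (hu0 : u 0 = 0)
    (hrange : ∀ y, 0 ≤ y → u y ∈ Set.Ico (0:ℝ) 1)
    (hderiv : ∀ y, 0 ≤ y → HasDerivAt u (d y) y)
    (hd : ∀ y, 0 ≤ y →
      d y ≤ C0 * (1 - u y) * Real.sqrt (-Real.log (μ * (1 - u y)))) :
    ∃ c C : ℝ, 0 < c ∧ 0 < C ∧
      ∀ y, 0 ≤ y → c * Real.exp (-(C * y ^ 2)) ≤ 1 - u y := by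
  have hh0 : ∀ y, 0 ≤ y → 0 < μ * (1 - u y) := fun y hy =>
    mul_pos hμ (sub_pos.mpr (hrange y hy).2)
  have hh1 : ∀ y, 0 ≤ y → μ * (1 - u y) < 1 := fun y hy => by
    nlinarith [(hrange y hy).1]
  refine ⟨μ, C0 ^ 2 / 2, hμ, by positivity, fun y hy => ?_⟩
  have hgrowth := sqrt_neg_log_le_add_mul (g' := fun y => μ * -d y) (K := C0)
    (fun y hy => ((hderiv y hy).const_sub 1).const_mul μ) hh0 hh1
    (fun y hy => by linarith [mul_le_mul_of_nonneg_left (hd y hy) hμ.le]) hy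
  rw [hu0, sub_zero, mul_one] at hgrowth
  have hlog := le_of_sqrt_le_add (neg_nonneg.mpr (log_nonpos (hh0 y hy).le (hh1 y hy).le))
    hgrowth
  rw [sq_sqrt (neg_nonneg.mpr (log_nonpos hμ.le (by linarith)))] at hlog
  have hexp : exp (log μ + (log μ - C0 ^ 2 / 2 * y ^ 2)) ≤ μ * (1 - u y) :=
    (le_log_iff_exp_le (hh0 y hy)).mp (by linarith)
  rw [exp_add, exp_log hμ, sub_eq_add_neg, exp_add, exp_log hμ] at hexp
  have : μ * (μ * exp (-(C0 ^ 2 / 2 * y ^ 2))) ≤ μ * (1 - u y) := by linarith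
  exact le_of_mul_le_mul_left this hμ
end

section
/- Let $w,\bar w:[0,1]\to(0,\infty)$ be continuous on $[0,1)$ with $w(\eta),\bar w(\eta)\ge \gamma_0>0$ for $\eta\in[0,m]$ where $m = \max\{u,\bar u\}<1$, and $1/w,\,1/\bar w \ge 1/C$ everywhere. Suppose $u,\bar u\in[0,1)$ satisfy $\int_0^{\bar u}\frac{d\eta}{\bar w(\eta)} = \int_0^{u}\frac{d\eta}{w(\eta)}$. Then $|\bar u - u| \le \frac{C}{\gamma_0^2}\int_0^1 |\bar w(\eta) - w(\eta)|\,d\eta$. -/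
/-!
Assume `u ≤ ū`. Splitting `∫₀^ū 1/w̄` at `u`, the hypothesis becomes
`∫ᵤ^ū 1/w̄ = ∫₀^u (1/w - 1/w̄) = ∫₀^u (w̄ - w)/(w w̄)`. The left side is at least `(ū - u)/C`
since `w̄ ≤ C`, and the right side is at most `γ₀⁻² ∫₀^1 |w̄ - w|` since `w, w̄ ≥ γ₀` on `[0, u]`.
-/

open Real Set intervalIntegral MeasureTheory

lemma inv_sub_inv_le_abs_sub_div_sq {γ x y : ℝ} (hγ : 0 < γ) (hx : γ ≤ x) (hy : γ ≤ y) :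
    x⁻¹ - y⁻¹ ≤ |y - x| / γ ^ 2 := by
  have hx₀ : 0 < x := hγ.trans_le hx
  have hy₀ : 0 < y := hγ.trans_le hy
  calc x⁻¹ - y⁻¹ = (y - x) / (x * y) := by field_simp
    _ ≤ |y - x| / (x * y) := by gcongr; exact le_abs_self _
    _ ≤ |y - x| / γ ^ 2 := by rw [sq]; gcongr

lemma IntervalIntegrable.of_continuousOn_Ico_of_norm_le {E : Type*} [NormedAddCommGroup E]
    {f : ℝ → E} {a b M : ℝ} (hab : a ≤ b) (hf : ContinuousOn f (Ico a b))
    (hM : ∀ x ∈ Ico a b, ‖f x‖ ≤ M) : IntervalIntegrable f volume a b := by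
  rw [intervalIntegrable_iff_integrableOn_Ico_of_le hab]
  refine ⟨hf.aestronglyMeasurable measurableSet_Ico,
    .restrict_of_bounded (C := M) measure_Ico_lt_top ?_⟩
  exact (ae_restrict_iff' measurableSet_Ico).2 (ae_of_all _ hM)

lemma intervalIntegral.integral_eq_integral_sub_of_integral_eq {f g : ℝ → ℝ} {c a b : ℝ}
    (hf : IntervalIntegrable f volume c a) (hg : IntervalIntegrable g volume c a)
    (hg' : IntervalIntegrable g volume a b) (heq : ∫ x in c..b, g x = ∫ x in c..a, f x) :
    ∫ x in a..b, g x = ∫ x in c..a, (f x - g x) := by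
  rw [integral_sub hf hg, ← heq, ← integral_add_adjacent_intervals hg hg']
  ring

lemma sub_le_div_sq_mul_integral_abs_sub_of_integral_inv_eq {a u ubar C γ : ℝ}
    {w wbar : ℝ → ℝ} (hγ : 0 < γ) (hC : 0 < C) (hau : a ≤ u) (hle : u ≤ ubar)
    (hwc : ContinuousOn w (Icc a ubar)) (hwbarc : ContinuousOn wbar (Icc a ubar))
    (hlb : ∀ η ∈ Icc a ubar, γ ≤ w η ∧ γ ≤ wbar η) (hub : ∀ η ∈ Icc a ubar, wbar η ≤ C)
    (heq : ∫ η in a..ubar, (wbar η)⁻¹ = ∫ η in a..u, (w η)⁻¹) :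
    ubar - u ≤ C / γ ^ 2 * ∫ η in a..u, |wbar η - w η| := by
  have hwpos η (hη : η ∈ Icc a ubar) : 0 < w η := hγ.trans_le (hlb η hη).1
  have hwbarpos η (hη : η ∈ Icc a ubar) : 0 < wbar η := hγ.trans_le (hlb η hη).2
  have hIw : IntervalIntegrable (fun η => (w η)⁻¹) volume a ubar :=
    (hwc.inv₀ fun η hη => (hwpos η hη).ne').intervalIntegrable_of_Icc (hau.trans hle)
  have hIwbar : IntervalIntegrable (fun η => (wbar η)⁻¹) volume a ubar :=
    (hwbarc.inv₀ fun η hη => (hwbarpos η hη).ne').intervalIntegrable_of_Icc (hau.trans hle)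
  have hu : u ∈ uIcc a ubar := mem_uIcc_of_le hau hle
  have hsub : Icc a u ⊆ Icc a ubar := Icc_subset_Icc_right hle
  calc ubar - u = C * ((ubar - u) * C⁻¹) := by field_simp
    _ ≤ C * ∫ η in u..ubar, (wbar η)⁻¹ := by
        gcongr
        simpa using integral_mono_on hle intervalIntegrable_const
          (hIwbar.mono_set (uIcc_subset_uIcc_right hu)) fun η hη =>
            inv_anti₀ (hwbarpos η ⟨hau.trans hη.1, hη.2⟩) (hub η ⟨hau.trans hη.1, hη.2⟩)
    _ = C * ∫ η in a..u, ((w η)⁻¹ - (wbar η)⁻¹) := by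
        rw [integral_eq_integral_sub_of_integral_eq (hIw.mono_set (uIcc_subset_uIcc_left hu))
          (hIwbar.mono_set (uIcc_subset_uIcc_left hu))
          (hIwbar.mono_set (uIcc_subset_uIcc_right hu)) heq]
    _ ≤ C * ∫ η in a..u, |wbar η - w η| / γ ^ 2 := by
        gcongr
        refine integral_mono_on hau ((hIw.sub hIwbar).mono_set (uIcc_subset_uIcc_left hu))
          (ContinuousOn.intervalIntegrable_of_Icc hau ?_) fun η hη =>
            inv_sub_inv_le_abs_sub_div_sq hγ (hlb η (hsub hη)).1 (hlb η (hsub hη)).2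
        exact (((hwbarc.mono hsub).sub (hwc.mono hsub)).abs).div_const _
    _ = C / γ ^ 2 * ∫ η in a..u, |wbar η - w η| := by
        rw [intervalIntegral.integral_div]; ring

theorem stmt_10
    (C γ0 u ubar : ℝ) (hC : 0 < C) (hγ0 : 0 < γ0)
    (hu : u ∈ Set.Ico (0:ℝ) 1) (hubar : ubar ∈ Set.Ico (0:ℝ) 1)
    (w wbar : ℝ → ℝ)
    (hwc : ContinuousOn w (Set.Ico 0 1)) (hwbarc : ContinuousOn wbar (Set.Ico 0 1))
    (hwpos : ∀ η ∈ Set.Ico (0:ℝ) 1, 0 < w η ∧ 0 < wbar η)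
    (hlb : ∀ η ∈ Set.Icc (0:ℝ) (max u ubar), γ0 ≤ w η ∧ γ0 ≤ wbar η)
    (hub : ∀ η ∈ Set.Icc (0:ℝ) 1, w η ≤ C ∧ wbar η ≤ C)
    (heq : ∫ η in (0:ℝ)..ubar, (wbar η)⁻¹ = ∫ η in (0:ℝ)..u, (w η)⁻¹) :
    |ubar - u| ≤ C / γ0 ^ 2 * ∫ η in (0:ℝ)..1, |wbar η - w η| := by
  wlog hle : u ≤ ubar generalizing u ubar w wbar
  · simpa only [abs_sub_comm] using this ubar u hubar hu wbar w hwbarc hwc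
      (fun η hη => (hwpos η hη).symm) (fun η hη => (hlb η (max_comm u ubar ▸ hη)).symm)
      (fun η hη => (hub η hη).symm) heq.symm (le_of_not_ge hle)
  have hsub : Icc 0 ubar ⊆ Ico 0 1 := Icc_subset_Ico_right hubar.2
  have hI : IntervalIntegrable (fun η => |wbar η - w η|) volume 0 1 :=
    .of_continuousOn_Ico_of_norm_le (M := C) zero_le_one (hwbarc.sub hwc).abs fun η hη => by
      have := hwpos η hη
      have := hub η (Ico_subset_Icc_self hη)
      rw [norm_abs_eq_norm, norm_eq_abs, abs_sub_le_iff]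
      constructor <;> linarith
  calc |ubar - u| = ubar - u := abs_of_nonneg (sub_nonneg.2 hle)
    _ ≤ C / γ0 ^ 2 * ∫ η in (0:ℝ)..u, |wbar η - w η| :=
        sub_le_div_sq_mul_integral_abs_sub_of_integral_inv_eq hγ0 hC hu.1 hle (hwc.mono hsub)
          (hwbarc.mono hsub) (max_eq_right hle ▸ hlb)
          (fun η hη => (hub η (Ico_subset_Icc_self (hsub hη))).2) heq
    _ ≤ C / γ0 ^ 2 * ∫ η in (0:ℝ)..1, |wbar η - w η| := by
        gcongr
        exact integral_mono_interval le_rfl hu.1 hu.2.le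
          (ae_of_all _ fun _ => abs_nonneg _) hI
end
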